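/- arXiv:1308.2096 — 5 statements merged into one kernel-verified Lean document; each statement's English description precedes it below -/
import Mathlib

section
/- Let G be a finite simple graph with minimum degree δ and maximum degree Δ, and let k and r be integers with -δ ≤ k ≤ Δ and 0 ≤ r ≤ (k+δ)/2. If G contains a defensive k-alliance, then G contains a defensive (k-2r)-alliance and a_{k-2r}(G) + r ≤ a_k(G). -/
open Finset

variable {V : Type*}

/-- `degIn G S v` is the number of neighbors that `v` has in `S` (denoted `δ_S(v)`). -/
def degIn [Fintype V] [DecidableEq V] (G : SimpleGraph V) [DecidableRel G.Adj]
    (S : Finset V) (v : V) : ℕ :=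
  (G.neighborFinset v ∩ S).card

/-- A nonempty set `S` is a defensive `k`-alliance in `G` if every vertex of `S` has at least
`k` more neighbors inside `S` than outside. -/
def IsDefensiveKAlliance [Fintype V] [DecidableEq V] (G : SimpleGraph V) [DecidableRel G.Adj]
    (k : ℤ) (S : Finset V) : Prop :=
  S.Nonempty ∧ ∀ v ∈ S, (degIn G Sᶜ v : ℤ) + k ≤ (degIn G S v : ℤ)

/-- The defensive `k`-alliance number: minimum cardinality of a defensive `k`-alliance. -/
noncomputable def defensiveAllianceNum [Fintype V] [DecidableEq V] (G : SimpleGraph V)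
    [DecidableRel G.Adj] (k : ℤ) : ℕ :=
  sInf {m : ℕ | ∃ S : Finset V, IsDefensiveKAlliance G k S ∧ S.card = m}

/-!
Remove any `r` vertices from a minimum defensive `k`-alliance `S`. Every remaining vertex loses
at most `r` neighbours inside and gains at most `r` outside, so what is left is a defensive
`(k - 2r)`-alliance of size `|S| - r`. It is nonempty because each `v ∈ S` satisfies
`k + δ ≤ 2 δ_S(v)`, hence `r ≤ δ_S(v) < |S|`.
-/

section

variable [Fintype V] [DecidableEq V] (G : SimpleGraph V) [DecidableRel G.Adj]

theorem degIn_add_degIn_compl (S : Finset V) (v : V) :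
    degIn G S v + degIn G Sᶜ v = G.degree v := by
  rw [degIn, degIn, ← card_union_of_disjoint (disjoint_compl_right.mono inter_subset_right
    inter_subset_right), ← inter_union_distrib_left, union_compl, inter_univ,
    G.card_neighborFinset_eq_degree]

theorem degIn_union_le (S X : Finset V) (v : V) :
    degIn G (S ∪ X) v ≤ degIn G S v + X.card := by
  rw [degIn, inter_union_distrib_left]
  exact (card_union_le _ _).trans (Nat.add_le_add_left (card_le_card inter_subset_right) _)

theorem degIn_lt_card {S : Finset V} {v : V} (hv : v ∈ S) : degIn G S v < S.card :=
  card_lt_card ⟨inter_subset_right, fun h => G.notMem_neighborFinset_self v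
    (mem_of_mem_inter_left (h hv))⟩

variable {G}

theorem IsDefensiveKAlliance.add_minDegree_le_two_mul_degIn {k : ℤ} {S : Finset V}
    (hS : IsDefensiveKAlliance G k S) {v : V} (hv : v ∈ S) :
    k + G.minDegree ≤ 2 * degIn G S v := by
  have hsplit : (degIn G S v : ℤ) + degIn G Sᶜ v = G.degree v := by
    exact_mod_cast degIn_add_degIn_compl G S v
  have hmin : (G.minDegree : ℤ) ≤ G.degree v := by exact_mod_cast G.minDegree_le_degree v
  linarith [hS.2 v hv]

theorem IsDefensiveKAlliance.sdiff {k : ℤ} {S X : Finset V} (hS : IsDefensiveKAlliance G k S)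
    (hXS : X ⊆ S) (hne : (S \ X).Nonempty) :
    IsDefensiveKAlliance G (k - 2 * X.card) (S \ X) := by
  refine ⟨hne, fun v hv => ?_⟩
  have hin : (degIn G S v : ℤ) ≤ degIn G (S \ X) v + X.card := by
    have := degIn_union_le G (S \ X) X v
    rw [sdiff_union_of_subset hXS] at this
    exact_mod_cast this
  have hout : (degIn G (S \ X)ᶜ v : ℤ) ≤ degIn G Sᶜ v + X.card := by
    rw [compl_sdiff, himp_eq, sup_eq_union, union_comm]
    exact_mod_cast degIn_union_le G Sᶜ X v
  linarith [hS.2 v (mem_sdiff.mp hv).1]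

theorem IsDefensiveKAlliance.exists_sub_two_mul {k : ℤ} {S : Finset V}
    (hS : IsDefensiveKAlliance G k S) {r : ℕ} (hr : 2 * (r : ℤ) ≤ k + G.minDegree) :
    ∃ T : Finset V, IsDefensiveKAlliance G (k - 2 * r) T ∧ T.card + r = S.card := by
  obtain ⟨v, hv⟩ := hS.1
  have hrS : r < S.card := by
    have := hS.add_minDegree_le_two_mul_degIn hv
    have := degIn_lt_card G hv
    omega
  obtain ⟨X, hXS, rfl⟩ := exists_subset_card_eq hrS.le
  have hcard : (S \ X).card + X.card = S.card := by
    rw [card_sdiff_of_subset hXS, Nat.sub_add_cancel hrS.le]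
  exact ⟨S \ X, hS.sdiff hXS (card_pos.mp (by omega)), hcard⟩

theorem IsDefensiveKAlliance.defensiveAllianceNum_le {k : ℤ} {S : Finset V}
    (hS : IsDefensiveKAlliance G k S) : defensiveAllianceNum G k ≤ S.card :=
  Nat.sInf_le ⟨S, hS, rfl⟩

theorem exists_card_eq_defensiveAllianceNum {k : ℤ}
    (hex : ∃ S : Finset V, IsDefensiveKAlliance G k S) :
    ∃ S : Finset V, IsDefensiveKAlliance G k S ∧ S.card = defensiveAllianceNum G k := by
  obtain ⟨S, hS⟩ := hex
  exact Nat.sInf_mem (s := {m | ∃ T : Finset V, IsDefensiveKAlliance G k T ∧ T.card = m})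
    ⟨S.card, S, hS, rfl⟩

end

theorem defensiveAllianceNum_sub_two_mul_add_le_general [Fintype V] [DecidableEq V]
    (G : SimpleGraph V) [DecidableRel G.Adj] (k : ℤ) (r : ℕ)
    (hr : (r : ℚ) ≤ ((k : ℚ) + (G.minDegree : ℚ)) / 2)
    (hex : ∃ S : Finset V, IsDefensiveKAlliance G k S) :
    (∃ S : Finset V, IsDefensiveKAlliance G (k - 2 * r) S) ∧
      defensiveAllianceNum G (k - 2 * r) + r ≤ defensiveAllianceNum G k := by
  have hr' : 2 * (r : ℤ) ≤ k + G.minDegree := by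
    have : 2 * (r : ℚ) ≤ k + G.minDegree := by linarith
    exact_mod_cast this
  obtain ⟨S, hS, hScard⟩ := exists_card_eq_defensiveAllianceNum hex
  obtain ⟨T, hT, hTcard⟩ := hS.exists_sub_two_mul hr'
  have hTmin := hT.defensiveAllianceNum_le
  exact ⟨⟨T, hT⟩, by omega⟩

/-- Theorem (monotonicity of the defensive `k`-alliance number): if `-δ ≤ k ≤ Δ` and
`0 ≤ r ≤ (k+δ)/2`, and `G` contains a defensive `k`-alliance, then `G` contains a defensive
`(k-2r)`-alliance and `a_{k-2r}(G) + r ≤ a_k(G)`. -/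
theorem defensiveAllianceNum_sub_two_mul_add_le [Fintype V] [DecidableEq V] [Nonempty V]
    (G : SimpleGraph V) [DecidableRel G.Adj] (k : ℤ) (r : ℕ)
    (hk1 : -(G.minDegree : ℤ) ≤ k) (hk2 : k ≤ (G.maxDegree : ℤ))
    (hr : (r : ℚ) ≤ ((k : ℚ) + (G.minDegree : ℚ)) / 2)
    (hex : ∃ S : Finset V, IsDefensiveKAlliance G k S) :
    (∃ S : Finset V, IsDefensiveKAlliance G (k - 2 * r) S) ∧
      defensiveAllianceNum G (k - 2 * r) + r ≤ defensiveAllianceNum G k :=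
  defensiveAllianceNum_sub_two_mul_add_le_general G k r hr hex
end

section
/- Let G be a finite simple graph of order n and minimum degree δ, and let k be an integer with -δ ≤ k ≤ 0. Then G contains a defensive k-alliance and a_k(G) ≤ ⌈(n+k+1)/2⌉. -/
/-!
Let `m = ⌈(n + k + 1) / 2⌉` and choose a set `A` of `m` vertices with the fewest edges
leaving it. Either `A` is a defensive `k`-alliance, or some `v ∈ A` has margin
`δ_A(v) - δ_{V∖A}(v) < k`. In the second case minimality of the cut under exchanging `v` with
a vertex outside `A` shows that every vertex of `(V ∖ A) ∪ {v}` has margin at least `1 - k`.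
Deleting `r` vertices lowers margins by at most `2r`, so deleting any `-k` of them leaves a
defensive `k`-alliance of `n - m + 1 + k ≤ m` vertices.
-/

open Finset

variable {V : Type*}

namespace SimpleGraph

variable [Fintype V] [DecidableEq V] (G : SimpleGraph V) [DecidableRel G.Adj]

def margin (S : Finset V) (v : V) : ℤ :=
  degIn G S v - degIn G Sᶜ v

def cut (S : Finset V) : ℤ :=
  ∑ v ∈ S, (degIn G Sᶜ v : ℤ)

variable {G}

lemma isDefensiveKAlliance_iff {k : ℤ} {S : Finset V} :
    IsDefensiveKAlliance G k S ↔ S.Nonempty ∧ ∀ v ∈ S, k ≤ margin G S v := by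
  simp only [IsDefensiveKAlliance, margin, le_sub_iff_add_le']

lemma degIn_insert {a : V} {S : Finset V} (ha : a ∉ S) (v : V) :
    degIn G (insert a S) v = degIn G S v + if G.Adj v a then 1 else 0 := by
  unfold degIn
  split_ifs with hva
  · rw [inter_insert_of_mem (G.mem_neighborFinset v a |>.2 hva),
      card_insert_of_notMem (by simp [ha])]
  · rw [inter_insert_of_notMem (by simpa using hva), add_zero]

lemma degIn_le_degIn_add_card_sdiff (S T : Finset V) (v : V) :
    degIn G S v ≤ degIn G T v + #(S \ T) := by
  refine (card_le_card fun w hw => ?_).trans (card_union_le _ _)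
  simp only [mem_inter, mem_union, mem_sdiff] at hw ⊢
  tauto

lemma sum_adj_eq_degIn (S : Finset V) (a : V) :
    ∑ w ∈ S, (if G.Adj w a then 1 else 0 : ℤ) = degIn G S a := by
  rw [sum_boole, degIn, inter_comm]
  congr 2
  ext w
  simp [G.adj_comm]

lemma margin_compl (S : Finset V) (v : V) : margin G Sᶜ v = -margin G S v := by
  rw [margin, margin, compl_compl, neg_sub]

lemma degIn_compl_insert {a : V} {S : Finset V} (ha : a ∉ S) (v : V) :
    (degIn G (insert a S)ᶜ v : ℤ) = degIn G Sᶜ v - if G.Adj v a then 1 else 0 := by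
  have h := degIn_insert (G := G) (notMem_erase a Sᶜ) v
  rw [insert_erase (mem_compl.2 ha)] at h
  rw [compl_insert, h]
  push_cast
  ring

lemma margin_insert {a : V} {S : Finset V} (ha : a ∉ S) (v : V) :
    margin G (insert a S) v = margin G S v + 2 * if G.Adj v a then 1 else 0 := by
  rw [margin, margin, degIn_insert ha, degIn_compl_insert ha]
  push_cast
  ring

lemma margin_insert_self {a : V} {S : Finset V} (ha : a ∉ S) :
    margin G (insert a S) a = margin G S a := by
  simp [margin_insert ha]

lemma margin_erase {a : V} {S : Finset V} (ha : a ∈ S) (v : V) :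
    margin G (S.erase a) v = margin G S v - 2 * if G.Adj v a then 1 else 0 := by
  rw [← insert_erase ha, margin_insert (notMem_erase a S), erase_insert (notMem_erase a S)]
  ring

lemma margin_sub_le_margin (S T : Finset V) (v : V) :
    margin G T v - 2 * #(T \ S) ≤ margin G S v := by
  have hin := degIn_le_degIn_add_card_sdiff (G := G) T S v
  have hout := degIn_le_degIn_add_card_sdiff (G := G) Sᶜ Tᶜ v
  rw [compl_sdiff_compl] at hout
  unfold margin
  omega

lemma isDefensiveKAlliance_of_subset {k : ℤ} {S T : Finset V} (hST : S ⊆ T) (hS : S.Nonempty)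
    (hT : ∀ v ∈ T, k + 2 * #(T \ S) ≤ margin G T v) : IsDefensiveKAlliance G k S :=
  isDefensiveKAlliance_iff.2
    ⟨hS, fun v hv => (le_sub_iff_add_le.2 (hT v (hST hv))).trans (margin_sub_le_margin S T v)⟩

lemma cut_insert {a : V} {S : Finset V} (ha : a ∉ S) :
    cut G (insert a S) = cut G S - margin G S a := by
  rw [cut, sum_insert ha, degIn_compl_insert ha, sum_congr rfl fun w _ => degIn_compl_insert ha w,
    sum_sub_distrib, sum_adj_eq_degIn, cut, margin]
  simp only [G.irrefl, if_false]
  ring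

lemma cut_erase {a : V} {S : Finset V} (ha : a ∈ S) :
    cut G (S.erase a) = cut G S + margin G S a := by
  have h := cut_insert (G := G) (notMem_erase a S)
  rw [← margin_insert_self (notMem_erase a S), insert_erase ha] at h
  linarith

/-- Exchanging `v ∈ A` with `w ∉ A` changes the cut by
`margin G A v - margin G A w + 2 [w ~ v]`, which is nonnegative by minimality. -/
lemma neg_margin_le_margin_insert_compl {A : Finset V}
    (hA : ∀ B : Finset V, #B = #A → cut G A ≤ cut G B) {v : V} (hv : v ∈ A) :
    ∀ w ∈ insert v Aᶜ, -margin G A v ≤ margin G (insert v Aᶜ) w := by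
  have hvc : v ∉ Aᶜ := notMem_compl.2 hv
  intro w hw
  rw [margin_insert hvc, margin_compl]
  obtain rfl | hwc := mem_insert.1 hw
  · simp
  have hwA : w ∉ A.erase v := fun h => mem_compl.1 hwc (mem_of_mem_erase h)
  have hcard : #(insert w (A.erase v)) = #A := by
    rw [card_insert_of_notMem hwA, card_erase_add_one hv]
  have hswap := hA _ hcard
  rw [cut_insert hwA, cut_erase hv, margin_erase hv] at hswap
  linarith

variable (G) in
theorem exists_isDefensiveKAlliance_card_le {k : ℤ} (hk : k ≤ 0) {m : ℕ}
    (hm : Fintype.card V + k + 1 ≤ 2 * m) (hm' : m ≤ Fintype.card V + k) :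
    ∃ S : Finset V, IsDefensiveKAlliance G k S ∧ #S ≤ m := by
  obtain ⟨A, hAm, hA⟩ := exists_min_image (powersetCard m univ) (cut G)
    (powersetCard_nonempty.2 (by rw [card_univ]; omega))
  have hAcard : #A = m := (mem_powersetCard.1 hAm).2
  have hAmin : ∀ B : Finset V, #B = #A → cut G A ≤ cut G B := fun B hB =>
    hA B (mem_powersetCard.2 ⟨subset_univ B, hB.trans hAcard⟩)
  by_cases hAk : ∀ v ∈ A, k ≤ margin G A v
  · exact ⟨A, isDefensiveKAlliance_iff.2 ⟨card_pos.1 (by omega), hAk⟩, hAcard.le⟩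
  push Not at hAk
  obtain ⟨v, hvA, hv⟩ := hAk
  -- every vertex of `insert v Aᶜ` has margin at least `1 - k`, so `-k` of them can be dropped
  have hT : #(insert v Aᶜ) = Fintype.card V - m + 1 := by
    rw [card_insert_of_notMem (notMem_compl.2 hvA), card_compl, hAcard]
  obtain ⟨S, hST, hS⟩ :=
    exists_subset_card_eq (show (Fintype.card V + k + 1 - m).toNat ≤ #(insert v Aᶜ) by omega)
  refine ⟨S, isDefensiveKAlliance_of_subset hST (card_pos.1 (by omega)) fun w hw => ?_,
    by omega⟩
  have := neg_margin_le_margin_insert_compl hAmin hvA w hw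
  rw [card_sdiff_of_subset hST]
  omega

end SimpleGraph

/-- Theorem: for `-δ ≤ k ≤ 0`, `G` contains a defensive `k`-alliance and
`a_k(G) ≤ ⌈(n+k+1)/2⌉`. -/
theorem defensiveAllianceNum_le_of_nonpos [Fintype V] [DecidableEq V] [Nonempty V]
    (G : SimpleGraph V) [DecidableRel G.Adj] (k : ℤ)
    (hk1 : -(G.minDegree : ℤ) ≤ k) (hk2 : k ≤ 0) :
    (∃ S : Finset V, IsDefensiveKAlliance G k S) ∧
      (defensiveAllianceNum G k : ℤ) ≤ ⌈((Fintype.card V : ℚ) + (k : ℚ) + 1) / 2⌉ := by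
  have hδ : G.minDegree < Fintype.card V :=
    (G.minDegree_le_degree (Classical.arbitrary V)).trans_lt (G.degree_lt_card_verts _)
  have hnk : (1 : ℚ) ≤ Fintype.card V + k := by
    exact_mod_cast (by omega : (1 : ℤ) ≤ Fintype.card V + k)
  obtain ⟨m, hm⟩ : ∃ m : ℕ, (m : ℤ) = ⌈((Fintype.card V : ℚ) + k + 1) / 2⌉ :=
    ⟨_, Int.toNat_of_nonneg (Int.ceil_nonneg (by linarith))⟩
  have hm2 : (Fintype.card V : ℤ) + k + 1 ≤ 2 * m := by
    have := hm ▸ Int.le_ceil (((Fintype.card V : ℚ) + k + 1) / 2)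
    exact_mod_cast (show ((Fintype.card V + k + 1 : ℤ) : ℚ) ≤ ((2 * m : ℤ) : ℚ) by
      push_cast at this ⊢; linarith)
  have hmn : (m : ℤ) ≤ Fintype.card V + k := hm ▸ Int.ceil_le.2 (by push_cast; linarith)
  obtain ⟨S, hS, hSm⟩ := G.exists_isDefensiveKAlliance_card_le hk2 hm2 hmn
  have hSnum : defensiveAllianceNum G k ≤ #S := Nat.sInf_le ⟨S, hS, rfl⟩
  exact ⟨⟨S, hS⟩, hm ▸ by exact_mod_cast hSnum.trans hSm⟩
end

section
/- For any finite tree T (of order at least 2), γ_{-1}^d(T) ≤ β_0(T), where β_0(T) is the independence number of T. -/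
open Finset

variable {V : Type*}

/-- `S` is a dominating set: every vertex outside `S` has a neighbor in `S`. -/
def IsDominatingSet (G : SimpleGraph V) (S : Finset V) : Prop :=
  ∀ v, v ∉ S → ∃ u ∈ S, G.Adj u v

/-- A global defensive `k`-alliance is a defensive `k`-alliance which is also dominating. -/
def IsGlobalDefensiveKAlliance [Fintype V] [DecidableEq V] (G : SimpleGraph V)
    [DecidableRel G.Adj] (k : ℤ) (S : Finset V) : Prop :=
  IsDefensiveKAlliance G k S ∧ IsDominatingSet G S

/-- The global defensive `k`-alliance number `γ_k^d(G)`. -/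
noncomputable def globalDefensiveAllianceNum [Fintype V] [DecidableEq V] (G : SimpleGraph V)
    [DecidableRel G.Adj] (k : ℤ) : ℕ :=
  sInf {m : ℕ | ∃ S : Finset V, IsGlobalDefensiveKAlliance G k S ∧ S.card = m}

/-- The independence number `β₀(G)`: maximum cardinality of a set of pairwise
nonadjacent vertices. -/
noncomputable def independenceNum [Fintype V] (G : SimpleGraph V) : ℕ :=
  sSup {m : ℕ | ∃ S : Finset V, (∀ u ∈ S, ∀ v ∈ S, u ≠ v → ¬ G.Adj u v) ∧ S.card = m}

/-!
Induction on the vertex set, inside an arbitrary finite forest. Take a vertex `u` all of whose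
neighbours but possibly one, `w`, are leaves, forming a nonempty set `L` (the second vertex of a
longest path is such a vertex). Delete `u` and `L`, and extend an alliance `S` and an independent
set `I` of the rest: `I` by `L`, and `S` by `u` together with about half of `L` if `w ∈ S` (then
`w` helps to defend `u`), or by `L` itself otherwise (then `u` stays outside, dominated by `L`, and
no vertex of `S` sees it). Either way `S` grows by at most `|L|`. Isolated vertices join both sets.
-/

namespace SimpleGraph

section PendantStar

variable {G : SimpleGraph V}

theorem IsAcyclic.eq_snd_of_adj_start_of_forall_length_le (hG : G.IsAcyclic) {a b z : V}
    {p : G.Walk a b} (hp : p.IsPath)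
    (hmax : ∀ (u v : V) (q : G.Walk u v), q.IsPath → q.length ≤ p.length) (hz : G.Adj a z) :
    z = p.snd := by
  by_contra hne
  have hzp : z ∉ p.support := fun h => hne (hG.eq_snd_of_adj_start hp hz h)
  have := hmax _ _ _ (hp.cons hzp (h := hz.symm))
  simp at this

theorem IsAcyclic.exists_pendant_star [Finite V] (hG : G.IsAcyclic) {a b : V} (hab : G.Adj a b) :
    ∃ u w x, G.Adj u x ∧ x ≠ w ∧ ∀ y, G.Adj u y → y ≠ w → ∀ z, G.Adj y z → z = u := by
  have : Nonempty V := ⟨a⟩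
  obtain ⟨x, _, p, hp, hmax⟩ := Walk.exists_isPath_forall_isPath_length_le_length G
  cases p with
  | nil =>
    have := hmax a b (.cons hab .nil) (by simp [hab.ne])
    simp at this
  | @cons _ u _ hxu q =>
    rw [Walk.cons_isPath_iff] at hp
    refine ⟨u, q.snd, x, hxu.symm, fun h => hp.2 (h ▸ q.getVert_mem_support 1), ?_⟩
    intro y huy hyw z hyz
    have hyq : y ∉ q.support := fun h => hyw (hG.eq_snd_of_adj_start hp.1 huy h)
    simpa using hG.eq_snd_of_adj_start_of_forall_length_le (hp.1.cons hyq (h := huy.symm))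
      (fun _ _ r hr => (hmax _ _ r hr).trans_eq (by simp)) hyz

variable (G) in
structure IsPendantStar (U : Finset V) (u w : V) (L : Finset V) : Prop where
  center_mem : u ∈ U
  subset : L ⊆ U
  adj : ∀ y ∈ L, G.Adj u y
  eq_or_mem_of_adj : ∀ y ∈ U, G.Adj u y → y = w ∨ y ∈ L
  eq_of_adj : ∀ y ∈ L, ∀ z ∈ U, G.Adj y z → z = u

theorem IsPendantStar.center_notMem {U L : Finset V} {u w : V} (hP : G.IsPendantStar U u w L) :
    u ∉ L :=
  fun h => G.loopless.irrefl u (hP.adj u h)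

theorem IsAcyclic.exists_isPendantStar [DecidableEq V] [DecidableRel G.Adj] (hG : G.IsAcyclic)
    (U : Finset V) {a b : V} (ha : a ∈ U) (hb : b ∈ U) (hab : G.Adj a b) :
    ∃ u w L, G.IsPendantStar U u w L ∧ L.Nonempty := by
  obtain ⟨⟨u, hu⟩, ⟨w, _⟩, ⟨x, hx⟩, hux, hxw, hleaf⟩ :=
    (hG.induce (U : Set V)).exists_pendant_star (a := ⟨a, ha⟩) (b := ⟨b, hb⟩) hab
  have hxw : x ≠ w := fun h => hxw (Subtype.ext h)
  refine ⟨u, w, (U.filter (G.Adj u)).erase w, ⟨hu, (erase_subset _ _).trans (filter_subset _ _),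
    fun y hy => (mem_filter.1 (mem_of_mem_erase hy)).2, fun y hy huy => ?_,
    fun y hy z hz hyz => ?_⟩, ⟨x, mem_erase.2 ⟨hxw, mem_filter.2 ⟨hx, hux⟩⟩⟩⟩
  · by_cases hyw : y = w
    · exact .inl hyw
    · exact .inr (by simp [hy, huy, hyw])
  · simp only [mem_erase, mem_filter] at hy
    exact congrArg Subtype.val
      (hleaf ⟨y, hy.2.1⟩ hy.2.2 (fun h => hy.1 (congrArg Subtype.val h)) ⟨z, hz⟩ hyz)

theorem IsPendantStar.isIndepSet_union [DecidableEq V] {U I L : Finset V} {u w : V}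
    (hP : G.IsPendantStar U u w L) (hI : G.IsIndepSet I) (hIU : I ⊆ U \ insert u L) :
    G.IsIndepSet (I ∪ L : Finset V) := by
  have hIu (a : V) (ha : a ∈ I) (z : V) (hz : z ∈ L) : ¬G.Adj z a := fun hza => by
    simpa [hP.eq_of_adj z hz a (mem_sdiff.1 (hIU ha)).1 hza] using hIU ha
  rw [coe_union]
  exact Set.pairwise_union.2 ⟨hI,
    fun a ha b hb _ hab => hP.center_notMem (hP.eq_of_adj a ha b (hP.subset hb) hab ▸ hb),
    fun a ha b hb _ => ⟨fun hab => hIu a ha b hb hab.symm, hIu a ha b hb⟩⟩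

end PendantStar

section Alliance

variable [Fintype V] [DecidableEq V] {G : SimpleGraph V} [DecidableRel G.Adj] {S T A : Finset V}
  {v : V}

theorem degIn_le_degIn (h : ∀ y ∈ S, G.Adj v y → y ∈ T) : degIn G S v ≤ degIn G T v :=
  card_le_card fun y hy => by
    rw [mem_inter, mem_neighborFinset] at hy ⊢
    exact ⟨hy.1, h y hy.2 hy.1⟩

theorem degIn_le_card (h : ∀ y ∈ T, G.Adj v y → y ∈ A) : degIn G T v ≤ A.card :=
  card_le_card fun y hy => by
    rw [mem_inter, mem_neighborFinset] at hy
    exact h y hy.2 hy.1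

theorem card_le_degIn (h : ∀ y ∈ A, G.Adj v y ∧ y ∈ T) : A.card ≤ degIn G T v :=
  card_le_card fun y hy => by
    rw [mem_inter, mem_neighborFinset]
    exact h y hy

variable (G) in
/-- A global defensive `(-1)`-alliance of the subgraph induced by `U`, not required to be
nonempty. -/
structure IsGlobalDefensiveAllianceOn (U S : Finset V) : Prop where
  subset : S ⊆ U
  dominating : ∀ v ∈ U \ S, ∃ s ∈ S, G.Adj s v
  defensive : ∀ v ∈ S, degIn G (U \ S) v ≤ degIn G S v + 1

theorem IsGlobalDefensiveAllianceOn.isGlobalDefensiveKAlliance [Nonempty V]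
    (h : IsGlobalDefensiveAllianceOn G univ S) : IsGlobalDefensiveKAlliance G (-1) S := by
  obtain ⟨-, hdom, hdef⟩ := h
  rw [← compl_eq_univ_sdiff] at hdom hdef
  replace hdom : IsDominatingSet G S := fun v hv => hdom v (mem_compl.2 hv)
  refine ⟨⟨?_, fun v hv => ?_⟩, hdom⟩
  · obtain ⟨v⟩ := ‹Nonempty V›
    by_cases hv : v ∈ S
    · exact ⟨v, hv⟩
    · obtain ⟨s, hs, -⟩ := hdom v hv
      exact ⟨s, hs⟩
  · have := hdef v hv
    omega

theorem IsGlobalDefensiveAllianceOn.union {U B E : Finset V}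
    (hS : IsGlobalDefensiveAllianceOn G (U \ B) S) (hBU : B ⊆ U) (hEB : E ⊆ B)
    (hSB : ∀ s ∈ S, ∀ y ∈ B \ E, ¬G.Adj s y) (hdom : ∀ y ∈ B \ E, ∃ e ∈ E, G.Adj e y)
    (hE : ∀ v ∈ E, degIn G (U \ (S ∪ E)) v ≤ degIn G (S ∪ E) v + 1) :
    IsGlobalDefensiveAllianceOn G U (S ∪ E) := by
  refine ⟨union_subset (hS.subset.trans sdiff_subset) (hEB.trans hBU), fun v hv => ?_,
    fun v hv => ?_⟩
  · rw [mem_sdiff, mem_union, not_or] at hv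
    by_cases hvB : v ∈ B
    · obtain ⟨e, he, hev⟩ := hdom v (mem_sdiff.2 ⟨hvB, hv.2.2⟩)
      exact ⟨e, mem_union_right _ he, hev⟩
    · obtain ⟨s, hs, hsv⟩ := hS.dominating v (by simp [hv.1, hv.2.1, hvB])
      exact ⟨s, mem_union_left _ hs, hsv⟩
  · rcases mem_union.1 hv with hvS | hvE
    · calc degIn G (U \ (S ∪ E)) v ≤ degIn G ((U \ B) \ S) v := by
            refine degIn_le_degIn fun y hy hvy => ?_
            simp only [mem_sdiff, mem_union, not_or] at hy ⊢
            exact ⟨⟨hy.1, fun hyB => hSB v hvS y (mem_sdiff.2 ⟨hyB, hy.2.2⟩) hvy⟩, hy.2.1⟩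
        _ ≤ degIn G S v + 1 := hS.defensive v hvS
        _ ≤ degIn G (S ∪ E) v + 1 := by grw [degIn_le_degIn fun y hy _ => mem_union_left E hy]
    · exact hE v hvE

end Alliance

section Extension

variable [Fintype V] [DecidableEq V] {G : SimpleGraph V} [DecidableRel G.Adj]
  {U S A L : Finset V} {u w : V}

theorem IsPendantStar.defensive_of_mem (hP : G.IsPendantStar U u w L) (T : Finset V) {y : V}
    (hy : y ∈ L) : degIn G (U \ T) y ≤ degIn G T y + 1 :=
  calc degIn G (U \ T) y ≤ ({u} : Finset V).card :=
        degIn_le_card fun z hz hyz => mem_singleton.2 (hP.eq_of_adj y hy z (mem_sdiff.1 hz).1 hyz)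
    _ ≤ degIn G T y + 1 := by simp

theorem IsPendantStar.isGlobalDefensiveAllianceOn_union_insert (hP : G.IsPendantStar U u w L)
    (hS : IsGlobalDefensiveAllianceOn G (U \ insert u L) S) (hw : w ∈ S) (huw : G.Adj u w)
    (hAL : A ⊆ L) (hA : L.card ≤ 2 * A.card + 2) :
    IsGlobalDefensiveAllianceOn G U (S ∪ insert u A) := by
  have hSU {s : V} (hs : s ∈ S) : s ∈ U ∧ s ≠ u ∧ s ∉ L := by simpa [not_or] using hS.subset hs
  refine hS.union (insert_subset hP.center_mem hP.subset) (insert_subset_insert _ hAL)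
    (fun s hs y hy hsy => ?_) (fun y hy => ?_) fun v hv => ?_
  · simp only [mem_sdiff, mem_insert, not_or] at hy
    exact (hSU hs).2.1 (hP.eq_of_adj y (hy.1.resolve_left hy.2.1) s (hSU hs).1 hsy.symm)
  · simp only [mem_sdiff, mem_insert, not_or] at hy
    exact ⟨u, mem_insert_self _ _, hP.adj y (hy.1.resolve_left hy.2.1)⟩
  rcases mem_insert.1 hv with rfl | hvA
  · have hout : degIn G (U \ (S ∪ insert v A)) v ≤ (L \ A).card :=
      degIn_le_card fun y hy hvy => by
        simp only [mem_sdiff, mem_union, mem_insert, not_or] at hy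
        rcases hP.eq_or_mem_of_adj y hy.1 hvy with rfl | hyL
        · exact absurd hw hy.2.1
        · exact mem_sdiff.2 ⟨hyL, hy.2.2.2⟩
    have hin : (insert w A).card ≤ degIn G (S ∪ insert v A) v :=
      card_le_degIn fun y hy => by
        rcases mem_insert.1 hy with rfl | hyA
        · exact ⟨huw, mem_union_left _ hw⟩
        · exact ⟨hP.adj y (hAL hyA), mem_union_right _ (mem_insert_of_mem hyA)⟩
    rw [card_sdiff_of_subset hAL] at hout
    rw [card_insert_of_notMem fun h => (hSU hw).2.2 (hAL h)] at hin
    omega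
  · exact hP.defensive_of_mem _ (hAL hvA)

theorem IsPendantStar.isGlobalDefensiveAllianceOn_union (hP : G.IsPendantStar U u w L)
    (hS : IsGlobalDefensiveAllianceOn G (U \ insert u L) S) (hL : L.Nonempty)
    (hw : ¬(w ∈ S ∧ G.Adj u w)) : IsGlobalDefensiveAllianceOn G U (S ∪ L) := by
  have hSU {s : V} (hs : s ∈ S) : s ∈ U ∧ s ≠ u ∧ s ∉ L := by simpa [not_or] using hS.subset hs
  have hBL {y : V} (hy : y ∈ insert u L \ L) : y = u := by
    simp only [mem_sdiff, mem_insert] at hy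
    exact hy.1.resolve_right hy.2
  refine hS.union (insert_subset hP.center_mem hP.subset) (subset_insert _ _)
    (fun s hs y hy hsy => ?_) (fun y hy => ?_) fun v hv => hP.defensive_of_mem _ hv
  · obtain rfl := hBL hy
    rcases hP.eq_or_mem_of_adj s (hSU hs).1 hsy.symm with rfl | hsL
    · exact hw ⟨hs, hsy.symm⟩
    · exact (hSU hs).2.2 hsL
  · obtain rfl := hBL hy
    obtain ⟨x, hx⟩ := hL
    exact ⟨x, hx, (hP.adj x hx).symm⟩

theorem IsPendantStar.exists_isGlobalDefensiveAllianceOn_union (hP : G.IsPendantStar U u w L)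
    (hS : IsGlobalDefensiveAllianceOn G (U \ insert u L) S) (hL : L.Nonempty) :
    ∃ E, IsGlobalDefensiveAllianceOn G U (S ∪ E) ∧ E.card ≤ L.card := by
  by_cases hw : w ∈ S ∧ G.Adj u w
  · obtain ⟨A, hAL, hA⟩ := exists_subset_card_eq (show (L.card - 1) / 2 ≤ L.card by omega)
    refine ⟨insert u A,
      hP.isGlobalDefensiveAllianceOn_union_insert hS hw.1 hw.2 hAL (by omega), ?_⟩
    have := hL.card_pos
    have := card_insert_le u A
    omega
  · exact ⟨L, hP.isGlobalDefensiveAllianceOn_union hS hL hw, le_rfl⟩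

end Extension

section Induction

variable [Fintype V] [DecidableEq V] {G : SimpleGraph V} [DecidableRel G.Adj] {U : Finset V}

variable (G) in
def HasAllianceLeIndepSet (U : Finset V) : Prop :=
  ∃ S I : Finset V, IsGlobalDefensiveAllianceOn G U S ∧ I ⊆ U ∧ G.IsIndepSet (I : Set V) ∧
    S.card ≤ I.card

theorem hasAllianceLeIndepSet_empty : HasAllianceLeIndepSet G ∅ :=
  ⟨∅, ∅, ⟨subset_rfl, by simp, by simp⟩, subset_rfl, by simp, le_rfl⟩

theorem HasAllianceLeIndepSet.of_erase_of_isolated {v : V} (hv : v ∈ U)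
    (hiso : ∀ y ∈ U, ¬G.Adj v y) (h : HasAllianceLeIndepSet G (U.erase v)) :
    HasAllianceLeIndepSet G U := by
  obtain ⟨S, I, hS, hIU, hI, hSI⟩ := h
  rw [← sdiff_singleton_eq_erase] at hS hIU
  have hvI : v ∉ I := fun h => by simpa using hIU h
  refine ⟨S ∪ {v}, insert v I, hS.union (singleton_subset_iff.2 hv) subset_rfl (by simp)
    (by simp) fun x hx => ?_, insert_subset hv (hIU.trans sdiff_subset), ?_, ?_⟩
  · obtain rfl := mem_singleton.1 hx
    have := degIn_le_card (G := G) (A := ∅) (T := U \ (S ∪ {x})) (v := x)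
      fun y hy hxy => absurd hxy (hiso y (mem_sdiff.1 hy).1)
    rw [card_empty] at this
    omega
  · rw [coe_insert]
    exact hI.insert fun y hy _ =>
      ⟨hiso y (hIU hy |> mem_sdiff.1).1, fun h => hiso y (hIU hy |> mem_sdiff.1).1 h.symm⟩
  · rw [card_insert_of_notMem hvI]
    exact (card_union_le _ _).trans (by simpa using hSI)

theorem HasAllianceLeIndepSet.of_sdiff_of_isPendantStar {u w : V} {L : Finset V}
    (hP : G.IsPendantStar U u w L) (hL : L.Nonempty)
    (h : HasAllianceLeIndepSet G (U \ insert u L)) : HasAllianceLeIndepSet G U := by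
  obtain ⟨S, I, hS, hIU, hI, hSI⟩ := h
  obtain ⟨E, hSE, hEL⟩ := hP.exists_isGlobalDefensiveAllianceOn_union hS hL
  have hIL : Disjoint I L :=
    Finset.disjoint_left.2 fun y hyI hyL => by simpa [hyL] using hIU hyI
  refine ⟨S ∪ E, I ∪ L, hSE, union_subset (hIU.trans sdiff_subset) hP.subset,
    hP.isIndepSet_union hI hIU, ?_⟩
  calc (S ∪ E).card ≤ S.card + E.card := card_union_le _ _
    _ ≤ I.card + L.card := add_le_add hSI hEL
    _ = (I ∪ L).card := (card_union_of_disjoint hIL).symm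

theorem IsAcyclic.hasAllianceLeIndepSet (hG : G.IsAcyclic) (U : Finset V) :
    HasAllianceLeIndepSet G U := by
  induction U using Finset.strongInduction with
  | H U ih =>
  obtain rfl | ⟨v, hv⟩ := U.eq_empty_or_nonempty
  · exact hasAllianceLeIndepSet_empty
  by_cases hiso : ∃ v ∈ U, ∀ y ∈ U, ¬G.Adj v y
  · obtain ⟨v, hv, hiso⟩ := hiso
    exact .of_erase_of_isolated hv hiso (ih _ (erase_ssubset hv))
  push Not at hiso
  obtain ⟨b, hb, hvb⟩ := hiso v hv
  obtain ⟨u, w, L, hP, hL⟩ := hG.exists_isPendantStar U hv hb hvb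
  exact .of_sdiff_of_isPendantStar hP hL
    (ih _ (sdiff_ssubset (insert_subset hP.center_mem hP.subset) (insert_nonempty _ _)))

end Induction

theorem independenceNum_eq_indepNum [Fintype V] (G : SimpleGraph V) :
    independenceNum G = G.indepNum := by
  unfold independenceNum indepNum
  congr! with n S
  exact ⟨fun ⟨hS, hn⟩ => ⟨fun u hu v hv => hS u hu v hv, hn⟩,
    fun ⟨hS, hn⟩ => ⟨fun u hu v hv => hS hu hv, hn⟩⟩

end SimpleGraph

theorem tree_globalDefensiveAllianceNum_le_independenceNum_general [Fintype V] [DecidableEq V]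
    (G : SimpleGraph V) [DecidableRel G.Adj] (hT : G.IsTree) :
    globalDefensiveAllianceNum G (-1) ≤ independenceNum G := by
  have : Nonempty V := hT.connected.nonempty
  obtain ⟨S, I, hS, -, hI, hSI⟩ := hT.isAcyclic.hasAllianceLeIndepSet univ
  calc globalDefensiveAllianceNum G (-1) ≤ S.card :=
        Nat.sInf_le ⟨S, hS.isGlobalDefensiveKAlliance, rfl⟩
    _ ≤ I.card := hSI
    _ ≤ G.indepNum := hI.card_le_indepNum
    _ = independenceNum G := G.independenceNum_eq_indepNum.symm

/-- Theorem: for any tree `T` (of order at least 2), `γ_{-1}^d(T) ≤ β₀(T)`. -/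
theorem tree_globalDefensiveAllianceNum_le_independenceNum [Fintype V] [DecidableEq V]
    (G : SimpleGraph V) [DecidableRel G.Adj] (hT : G.IsTree) (hn : 2 ≤ Fintype.card V) :
    globalDefensiveAllianceNum G (-1) ≤ independenceNum G :=
  tree_globalDefensiveAllianceNum_le_independenceNum_general G hT
end

section
/- Let G = (V,E) be a finite simple graph, let k be an integer, and let S ⊆ V be a boundary defensive k-alliance in G. Let m(⟨S⟩) be the number of edges of G with both endpoints in S, and let c be the number of edges of G with exactly one endpoint in S. Then (i) 2·m(⟨S⟩) = c + |S|·k; and (ii) if G is δ-regular, then 4·m(⟨S⟩) = |S|·(δ+k) and 2c = |S|·(δ-k). -/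
open Finset

variable {V : Type*}

/-- A nonempty set `S` is a boundary defensive `k`-alliance in `G` if every vertex of `S` has
exactly `k` more neighbors inside `S` than outside. -/
def IsBoundaryDefensiveKAlliance [Fintype V] [DecidableEq V] (G : SimpleGraph V)
    [DecidableRel G.Adj] (k : ℤ) (S : Finset V) : Prop :=
  S.Nonempty ∧ ∀ v ∈ S, (degIn G S v : ℤ) = (degIn G Sᶜ v : ℤ) + k

/-- The number of edges of `G` with both endpoints in `S` (the size of `⟨S⟩`). -/
def edgesIn [Fintype V] [DecidableEq V] (G : SimpleGraph V) [DecidableRel G.Adj]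
    (S : Finset V) : ℕ :=
  (G.edgeFinset.filter fun e => ∀ v ∈ e, v ∈ S).card

/-- The number of edges of `G` with exactly one endpoint in `S`. -/
def edgesCrossing [Fintype V] [DecidableEq V] (G : SimpleGraph V) [DecidableRel G.Adj]
    (S : Finset V) : ℕ :=
  (G.edgeFinset.filter fun e => (∃ v ∈ e, v ∈ S) ∧ ∃ v ∈ e, v ∉ S).card

/-! Double counting over darts: summing `δ_S` over `S` counts every edge inside `S` twice, and
summing `δ_{V∖S}` over `S` counts every crossing edge once. Summing the alliance condition over `S`
gives (i); in a `δ`-regular graph `δ_S(v) + δ_{V∖S}(v) = δ`, so `2·m(⟨S⟩) + c = |S|·δ`, which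
together with (i) gives (ii). -/

namespace SimpleGraph

variable [Fintype V] [DecidableEq V] (G : SimpleGraph V) [DecidableRel G.Adj]

lemma card_interedges_eq_sum_degIn (s t : Finset V) :
    #(G.interedges s t) = ∑ v ∈ s, degIn G t v := by
  rw [interedges_def, card_filter, sum_product]
  refine sum_congr rfl fun v _ => ?_
  rw [← card_filter, degIn, neighborFinset_eq_filter, filter_inter, univ_inter]

lemma card_interedges_eq_card_darts (s t : Finset V) :
    #(G.interedges s t) = #{d : G.Dart | d.fst ∈ s ∧ d.snd ∈ t} := by
  rw [← card_map ⟨_, Dart.toProd_injective⟩]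
  congr 1
  ext ⟨x, y⟩
  simp only [mem_interedges_iff, mem_map, mem_filter, mem_univ, true_and,
    Function.Embedding.coeFn_mk]
  constructor
  · rintro ⟨hx, hy, hxy⟩
    exact ⟨⟨(x, y), hxy⟩, ⟨hx, hy⟩, rfl⟩
  · rintro ⟨⟨p, hp⟩, ⟨hx, hy⟩, rfl⟩
    exact ⟨hx, hy, hp⟩

lemma card_darts_filter_edge (P : Sym2 V → Prop) [DecidablePred P] :
    #{d : G.Dart | P d.edge} = 2 * #{e ∈ G.edgeFinset | P e} := by
  rw [card_eq_sum_card_fiberwise (f := Dart.edge) (t := {e ∈ G.edgeFinset | P e})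
    (fun d hd => mem_filter.mpr ⟨mem_edgeFinset.mpr d.edge_mem, (mem_filter.mp hd).2⟩),
    mul_comm, ← smul_eq_mul, ← sum_const]
  refine sum_congr rfl fun e he => ?_
  rw [mem_filter, mem_edgeFinset] at he
  rw [filter_filter, ← G.dart_edge_fiber_card e he.1]
  congr 1
  ext d
  simp only [mem_filter, mem_univ, true_and, and_iff_right_iff_imp]
  rintro rfl
  exact he.2

lemma sum_degIn_self (S : Finset V) : ∑ v ∈ S, degIn G S v = 2 * edgesIn G S := by
  rw [← card_interedges_eq_sum_degIn, card_interedges_eq_card_darts, edgesIn,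
    ← card_darts_filter_edge]
  congr 1
  ext d
  simp [Dart.edge]

lemma sum_degIn_compl (S : Finset V) : ∑ v ∈ S, degIn G Sᶜ v = edgesCrossing G S := by
  rw [← card_interedges_eq_sum_degIn]
  have hsymm : #(G.interedges Sᶜ S) = #(G.interedges S Sᶜ) :=
    have := G.symm
    Rel.card_interedges_comm _ _
  have hdarts : 2 * edgesCrossing G S = #(G.interedges S Sᶜ) + #(G.interedges Sᶜ S) := by
    rw [edgesCrossing, ← card_darts_filter_edge, card_interedges_eq_card_darts,
      card_interedges_eq_card_darts, ← card_union_of_disjoint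
        (disjoint_filter.mpr fun d _ hS hSc => mem_compl.mp hSc.1 hS.1)]
    congr 1
    ext d
    simp only [Dart.edge, Sym2.mem_iff, mem_filter, mem_univ, true_and, mem_union, mem_compl,
      or_and_right, exists_or, exists_eq_left]
    tauto
  omega

lemma degIn_add_degIn_compl (S : Finset V) (v : V) :
    degIn G S v + degIn G Sᶜ v = G.degree v := by
  rw [degIn, degIn, ← sdiff_eq_inter_compl, card_inter_add_card_sdiff,
    card_neighborFinset_eq_degree]

end SimpleGraph

/-- Theorem: if `S` is a boundary defensive `k`-alliance in `G`, then
(i) `2·m(⟨S⟩) = c + |S|·k`, and (ii) if `G` is `δ`-regular then `4·m(⟨S⟩) = |S|·(δ+k)`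
and `2c = |S|·(δ-k)`, where `c` is the number of edges with exactly one endpoint in `S`. -/
theorem boundaryDefensiveKAlliance_edge_counts [Fintype V] [DecidableEq V]
    (G : SimpleGraph V) [DecidableRel G.Adj] (k : ℤ) (S : Finset V)
    (hS : IsBoundaryDefensiveKAlliance G k S) :
    2 * (edgesIn G S : ℤ) = (edgesCrossing G S : ℤ) + (S.card : ℤ) * k ∧
      ∀ d : ℕ, G.IsRegularOfDegree d →
        4 * (edgesIn G S : ℤ) = (S.card : ℤ) * ((d : ℤ) + k) ∧
          2 * (edgesCrossing G S : ℤ) = (S.card : ℤ) * ((d : ℤ) - k) := by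
  have hin : ∑ v ∈ S, (degIn G S v : ℤ) = 2 * edgesIn G S := mod_cast G.sum_degIn_self S
  have hcross : ∑ v ∈ S, (degIn G Sᶜ v : ℤ) = edgesCrossing G S :=
    mod_cast G.sum_degIn_compl S
  have halliance : ∑ v ∈ S, (degIn G S v : ℤ) = ∑ v ∈ S, (degIn G Sᶜ v : ℤ) + #S * k := by
    rw [sum_congr rfl hS.2, sum_add_distrib, sum_const, nsmul_eq_mul]
  refine ⟨by linarith, fun d hd => ?_⟩
  have hdeg : ∑ v ∈ S, ((degIn G S v : ℤ) + degIn G Sᶜ v) = #S * d := by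
    rw [sum_congr rfl fun v _ => ?_, sum_const, nsmul_eq_mul]
    exact_mod_cast (G.degIn_add_degIn_compl S v).trans (hd v)
  rw [sum_add_distrib] at hdeg
  constructor <;> linarith
end

section
/- Let G = (V₁,E₁) and H = (V₂,E₂) be finite simple graphs with maximum degrees Δ₁ and Δ₂ respectively, and let k be an integer. If S ⊆ V₁×V₂ is a defensive k-alliance in the Cartesian product G□H, then the projection P_G(S) of S onto V₁ is a defensive (k-Δ₂)-alliance in G and the projection P_H(S) of S onto V₂ is a defensive (k-Δ₁)-alliance in H. -/
/-!
Fix `(a, b) ∈ S`. Its neighbours in `G □ H` are the `(a', b)` with `a' ~ a` and the `(a, b')` with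
`b' ~ b`. Those of the first kind that lie in `S` inject (via `Prod.fst`) into the neighbours of `a`
in `P_G(S)`, and there are at most `Δ₂` of the second kind; conversely `a' ↦ (a', b)` embeds the
neighbours of `a` outside `P_G(S)` into the neighbours of `(a, b)` outside `S`. The projection to
`H` follows from the isomorphism `G □ H ≃g H □ G`, which preserves alliances.
-/

open Finset

variable {V : Type*}

instance {α β : Type*} (G : SimpleGraph α) (H : SimpleGraph β) [DecidableEq α] [DecidableEq β]
    [DecidableRel G.Adj] [DecidableRel H.Adj] : DecidableRel (G □ H).Adj := fun _ _ =>
  decidable_of_iff _ (SimpleGraph.boxProd_adj).symm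

section Iso

variable {W : Type*} [Fintype V] [DecidableEq V] [Fintype W] [DecidableEq W]
  {G : SimpleGraph V} {G' : SimpleGraph W} [DecidableRel G.Adj] [DecidableRel G'.Adj]

lemma degIn_eq_card_filter (S : Finset V) (v : V) : degIn G S v = #{u ∈ S | G.Adj v u} := by
  rw [degIn, ← filter_mem_eq_inter]
  congr 1
  ext u
  simp only [mem_filter, SimpleGraph.mem_neighborFinset, and_comm]

lemma Finset.compl_map_equiv (e : V ≃ W) (S : Finset V) :
    (S.map e.toEmbedding)ᶜ = Sᶜ.map e.toEmbedding := by
  ext w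
  simp only [mem_compl, mem_map_equiv]

lemma degIn_map_iso (e : G ≃g G') (S : Finset V) (v : V) :
    degIn G' (S.map e.toEquiv.toEmbedding) (e v) = degIn G S v := by
  rw [degIn_eq_card_filter, degIn_eq_card_filter, filter_map, card_map]
  congr 2
  ext u
  exact e.map_adj_iff

lemma IsDefensiveKAlliance.map_iso {k : ℤ} {S : Finset V} (e : G ≃g G')
    (hS : IsDefensiveKAlliance G k S) :
    IsDefensiveKAlliance G' k (S.map e.toEquiv.toEmbedding) := by
  refine ⟨hS.1.map, fun w hw => ?_⟩
  obtain ⟨v, hv, rfl⟩ := mem_map.mp hw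
  simpa only [Finset.compl_map_equiv, Equiv.coe_toEmbedding, RelIso.coe_fn_toEquiv, degIn_map_iso]
    using hS.2 v hv

end Iso

section BoxProd

variable {V₁ V₂ : Type*} [Fintype V₁] [Fintype V₂] [DecidableEq V₁] [DecidableEq V₂]
  {G : SimpleGraph V₁} {H : SimpleGraph V₂} [DecidableRel G.Adj] [DecidableRel H.Adj]

lemma degIn_boxProd_le (S : Finset (V₁ × V₂)) (a : V₁) (b : V₂) :
    degIn (G □ H) S (a, b) ≤ degIn G (S.image Prod.fst) a + H.degree b := by
  have hsplit : {p ∈ S | (G □ H).Adj (a, b) p} =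
      {p ∈ S | G.Adj a p.1 ∧ b = p.2} ∪ {p ∈ S | H.Adj b p.2 ∧ a = p.1} := by
    simp only [SimpleGraph.boxProd_adj, filter_or]
  have hG : #{p ∈ S | G.Adj a p.1 ∧ b = p.2} ≤ degIn G (S.image Prod.fst) a := by
    rw [degIn_eq_card_filter]
    refine card_le_card_of_injOn Prod.fst (fun p hp => ?_) fun p hp q hq hpq => ?_
    · simp only [coe_filter, Set.mem_ofPred_eq] at hp
      simpa using ⟨⟨p.2, hp.1⟩, hp.2.1⟩
    · simp only [coe_filter, Set.mem_ofPred_eq] at hp hq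
      exact Prod.ext hpq (hp.2.2.symm.trans hq.2.2)
  have hH : #{p ∈ S | H.Adj b p.2 ∧ a = p.1} ≤ H.degree b := by
    rw [← SimpleGraph.card_neighborFinset_eq_degree]
    refine card_le_card_of_injOn Prod.snd (fun p hp => ?_) fun p hp q hq hpq => ?_
    · simp only [coe_filter, Set.mem_ofPred_eq] at hp
      simpa using hp.2.1
    · simp only [coe_filter, Set.mem_ofPred_eq] at hp hq
      exact Prod.ext (hp.2.2.symm.trans hq.2.2) hpq
  rw [degIn_eq_card_filter, hsplit]
  exact (card_union_le _ _).trans (add_le_add hG hH)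

lemma degIn_compl_image_fst_le (S : Finset (V₁ × V₂)) (a : V₁) (b : V₂) :
    degIn G (S.image Prod.fst)ᶜ a ≤ degIn (G □ H) Sᶜ (a, b) := by
  rw [degIn_eq_card_filter, degIn_eq_card_filter]
  refine card_le_card_of_injOn (fun x => (x, b)) (fun x hx => ?_) fun x _ y _ hxy => ?_
  · simp only [coe_filter, Set.mem_ofPred_eq, mem_compl, mem_image] at hx ⊢
    exact ⟨fun hxb => hx.1 ⟨_, hxb, rfl⟩, SimpleGraph.boxProd_adj.mpr (Or.inl ⟨hx.2, rfl⟩)⟩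
  · exact (Prod.ext_iff.mp hxy).1

variable {k : ℤ} {S : Finset (V₁ × V₂)}

theorem IsDefensiveKAlliance.image_fst (hS : IsDefensiveKAlliance (G □ H) k S) :
    IsDefensiveKAlliance G (k - H.maxDegree) (S.image Prod.fst) := by
  refine ⟨hS.1.image _, fun a ha => ?_⟩
  obtain ⟨⟨a, b⟩, hab, rfl⟩ := mem_image.mp ha
  dsimp only
  have hin := degIn_boxProd_le (G := G) (H := H) S a b
  have hout := degIn_compl_image_fst_le (G := G) (H := H) S a b
  have hdeg := H.degree_le_maxDegree b
  have halliance := hS.2 _ hab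
  omega

theorem IsDefensiveKAlliance.image_snd (hS : IsDefensiveKAlliance (G □ H) k S) :
    IsDefensiveKAlliance H (k - G.maxDegree) (S.image Prod.snd) := by
  have hswap : S.image Prod.snd = (S.map (Equiv.prodComm V₁ V₂).toEmbedding).image Prod.fst := by
    rw [map_eq_image, image_image]
    rfl
  rw [hswap]
  exact (hS.map_iso (SimpleGraph.boxProdComm G H)).image_fst

end BoxProd

/-- Theorem: if `S` is a defensive `k`-alliance in `G □ H`, then the projection of `S` onto
`G` is a defensive `(k-Δ₂)`-alliance in `G` and the projection of `S` onto `H` is a defensive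
`(k-Δ₁)`-alliance in `H`. -/
theorem boxProd_defensiveAlliance_projections {V₁ V₂ : Type*} [Fintype V₁] [Fintype V₂]
    [DecidableEq V₁] [DecidableEq V₂] (G : SimpleGraph V₁) (H : SimpleGraph V₂)
    [DecidableRel G.Adj] [DecidableRel H.Adj] (k : ℤ) (S : Finset (V₁ × V₂))
    (hS : IsDefensiveKAlliance (G □ H) k S) :
    IsDefensiveKAlliance G (k - (H.maxDegree : ℤ)) (S.image Prod.fst) ∧
      IsDefensiveKAlliance H (k - (G.maxDegree : ℤ)) (S.image Prod.snd) :=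
  ⟨hS.image_fst, hS.image_snd⟩
end
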